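/- arXiv:1202.3505 — 7 statements merged into one kernel-verified Lean document; each statement's English description precedes it below -/
import Mathlib

section
/- Let A ∈ ℝ^{n×d} of rank k with thin SVD A = U_A Σ_A V_Aᵀ (U_A ∈ ℝ^{n×k}), B ∈ ℝ^{n×ω}, and let W ∈ ℝ^{r×n} be any matrix such that W·U_A has rank k. Let X_opt = A⁺B and X̃_opt = (W A)⁺ W B. Then for the Frobenius norm, ‖A X̃_opt − B‖_F² ≤ ‖A X_opt − B‖_F² + ‖(W U_A)⁺ W (A X_opt − B)‖_F². -/
open Matrix

noncomputable def frobSq {m n : ℕ} (M : Matrix (Fin m) (Fin n) ℝ) : ℝ :=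
  ∑ i, ∑ j, (M i j) ^ 2

def IsPinv {m n : ℕ} (A : Matrix (Fin m) (Fin n) ℝ) (P : Matrix (Fin n) (Fin m) ℝ) : Prop :=
  A * P * A = A ∧ P * A * P = P ∧ (A * P)ᵀ = A * P ∧ (P * A)ᵀ = P * A

lemma frobSq_eq_trace {m n : ℕ} (M : Matrix (Fin m) (Fin n) ℝ) :
    frobSq M = (Mᵀ * M).trace := by
  simp only [frobSq, Matrix.trace, Matrix.diag_apply, Matrix.mul_apply,
    Matrix.transpose_apply, sq]
  rw [Finset.sum_comm]

lemma frobSq_neg {m n : ℕ} (M : Matrix (Fin m) (Fin n) ℝ) :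
    frobSq (-M) = frobSq M := by
  simp [frobSq]

lemma cancel_left {a b c : ℕ} {P : Matrix (Fin a) (Fin b) ℝ} {Q : Matrix (Fin b) (Fin a) ℝ}
    (h : P * Q = 1) (X : Matrix (Fin a) (Fin c) ℝ) : P * (Q * X) = X := by
  rw [← Matrix.mul_assoc, h, Matrix.one_mul]

lemma frobSq_add_of_orth {m n : ℕ} {X Y : Matrix (Fin m) (Fin n) ℝ}
    (h : Xᵀ * Y = 0) : frobSq (X + Y) = frobSq X + frobSq Y := by
  have hYX : Yᵀ * X = 0 := by
    have := congrArg Matrix.transpose h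
    simpa [Matrix.transpose_mul] using this
  rw [frobSq_eq_trace, frobSq_eq_trace, frobSq_eq_trace]
  simp [Matrix.transpose_add, Matrix.add_mul, Matrix.mul_add, h, hYX, Matrix.trace_add]

lemma frobSq_orth_mul {m n p : ℕ} {U : Matrix (Fin m) (Fin p) ℝ} (hU : Uᵀ * U = 1)
    (M : Matrix (Fin p) (Fin n) ℝ) : frobSq (U * M) = frobSq M := by
  rw [frobSq_eq_trace, frobSq_eq_trace, Matrix.transpose_mul, Matrix.mul_assoc,
    cancel_left hU]

lemma pinv_unique {m n : ℕ} {X : Matrix (Fin m) (Fin n) ℝ}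
    {P Q : Matrix (Fin n) (Fin m) ℝ} (hP : IsPinv X P) (hQ : IsPinv X Q) : P = Q := by
  obtain ⟨hP1, hP2, hP3, hP4⟩ := hP
  obtain ⟨hQ1, hQ2, hQ3, hQ4⟩ := hQ
  have hXP : X * P = X * Q := by
    calc X * P = (X * Q * X) * P := by rw [hQ1]
    _ = (X * Q) * (X * P) := by rw [Matrix.mul_assoc]
    _ = (X * Q)ᵀ * (X * P)ᵀ := by rw [hQ3, hP3]
    _ = Qᵀ * (X * P * X)ᵀ := by
        rw [Matrix.transpose_mul, Matrix.transpose_mul (X * P) X, Matrix.transpose_mul X P,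
          Matrix.mul_assoc]
    _ = Qᵀ * Xᵀ := by rw [hP1]
    _ = (X * Q)ᵀ := by rw [Matrix.transpose_mul]
    _ = X * Q := hQ3
  have hPX : P * X = Q * X := by
    calc P * X = P * (X * Q * X) := by rw [hQ1]
    _ = (P * X) * (Q * X) := by simp only [Matrix.mul_assoc]
    _ = (P * X)ᵀ * (Q * X)ᵀ := by rw [hP4, hQ4]
    _ = (X * P * X)ᵀ * Qᵀ := by
        simp only [Matrix.transpose_mul, Matrix.mul_assoc]
    _ = Xᵀ * Qᵀ := by rw [hP1]
    _ = (Q * X)ᵀ := by rw [Matrix.transpose_mul]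
    _ = Q * X := hQ4
  calc P = P * X * P := hP2.symm
  _ = P * (X * Q) := by rw [Matrix.mul_assoc, hXP]
  _ = (Q * X) * Q := by rw [← Matrix.mul_assoc, hPX]
  _ = Q := hQ2

lemma idem_full_rank_eq_one {k : ℕ} (M : Matrix (Fin k) (Fin k) ℝ)
    (h : M.rank = k) (hM : M * M = M) : M = 1 := by
  have hsurj : Function.Surjective M.mulVecLin := by
    rw [← LinearMap.range_eq_top]
    apply Submodule.eq_top_of_finrank_eq
    rw [← Matrix.rank, h]
    simp [Module.finrank_pi]
  have hv : ∀ v, M *ᵥ v = v := by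
    intro v
    obtain ⟨w, hw⟩ := hsurj v
    simp only [Matrix.mulVecLin_apply] at hw
    conv_lhs => rw [← hw, Matrix.mulVec_mulVec, hM, hw]
  ext i j
  have := congrFun (hv (Pi.single j 1)) i
  simpa [Matrix.mulVec_single, Matrix.one_apply, Pi.single_apply, eq_comm] using this

theorem generic_coreset_bound_frobenius {n d ω r k : ℕ}
    (A : Matrix (Fin n) (Fin d) ℝ) (hkA : A.rank = k)
    (U : Matrix (Fin n) (Fin k) ℝ) (S : Matrix (Fin k) (Fin k) ℝ)
    (V : Matrix (Fin d) (Fin k) ℝ)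
    (hSVD : A = U * S * Vᵀ) (hU : Uᵀ * U = 1) (hV : Vᵀ * V = 1)
    (hSdiag : S.IsDiag) (hSinv : IsUnit S.det)
    (B : Matrix (Fin n) (Fin ω) ℝ)
    (W : Matrix (Fin r) (Fin n) ℝ) (hrank : (W * U).rank = k)
    (Ap : Matrix (Fin d) (Fin n) ℝ) (hAp : IsPinv A Ap)
    (Pwa : Matrix (Fin d) (Fin r) ℝ) (hPwa : IsPinv (W * A) Pwa)
    (Pwu : Matrix (Fin k) (Fin r) ℝ) (hPwu : IsPinv (W * U) Pwu)
    (Xopt : Matrix (Fin d) (Fin ω) ℝ) (hXopt : Xopt = Ap * B)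
    (Xt : Matrix (Fin d) (Fin ω) ℝ) (hXt : Xt = Pwa * (W * B)) :
    frobSq (A * Xt - B)
      ≤ frobSq (A * Xopt - B) + frobSq (Pwu * (W * (A * Xopt - B))) := by
  obtain ⟨hPwu1, hPwu2, hPwu3, hPwu4⟩ := hPwu
  have hSS : S * S⁻¹ = 1 := Matrix.mul_nonsing_inv S hSinv
  have hSS' : S⁻¹ * S = 1 := Matrix.nonsing_inv_mul S hSinv
  -- Pwu is a left inverse of W * U
  have hPwuI : Pwu * (W * U) = 1 := by
    apply idem_full_rank_eq_one
    · refine le_antisymm ((Pwu * (W * U)).rank_le_width) ?_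
      have h1 : (W * U) * (Pwu * (W * U)) = W * U := by
        rw [← Matrix.mul_assoc, hPwu1]
      calc k = ((W * U) * (Pwu * (W * U))).rank := by rw [h1, hrank]
      _ ≤ (Pwu * (W * U)).rank := Matrix.rank_mul_le_right _ _
    · rw [Matrix.mul_assoc Pwu (W * U), ← Matrix.mul_assoc (W * U) Pwu, hPwu1]
  -- the pseudoinverse of W * A equals V * S⁻¹ * Pwu
  have hQ1 : (W * A) * (V * S⁻¹ * Pwu) = W * (U * Pwu) := by
    simp only [hSVD, Matrix.mul_assoc]
    rw [cancel_left hV, cancel_left hSS]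
  have hPwaEq : Pwa = V * S⁻¹ * Pwu := by
    refine pinv_unique hPwa ⟨?_, ?_, ?_, ?_⟩
    · rw [hQ1]
      simp only [hSVD, Matrix.mul_assoc]
      rw [← Matrix.mul_assoc W U (S * Vᵀ), cancel_left hPwuI, Matrix.mul_assoc]
    · rw [Matrix.mul_assoc, hQ1]
      simp only [Matrix.mul_assoc]
      rw [← Matrix.mul_assoc W U Pwu, cancel_left hPwuI]
    · rw [hQ1, ← Matrix.mul_assoc]
      exact hPwu3
    · have hQ2 : (V * S⁻¹ * Pwu) * (W * A) = V * Vᵀ := by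
        simp only [hSVD, Matrix.mul_assoc]
        rw [← Matrix.mul_assoc W U (S * Vᵀ), cancel_left hPwuI, cancel_left hSS']
      rw [hQ2, Matrix.transpose_mul, Matrix.transpose_transpose]
  -- key identities
  have key1 : A * Xt = U * (Pwu * (W * B)) := by
    rw [hXt, hPwaEq]
    simp only [hSVD, Matrix.mul_assoc]
    rw [cancel_left hV, cancel_left hSS]
  have key2 : U * (Pwu * (W * (A * Xopt))) = A * Xopt := by
    simp only [hSVD, Matrix.mul_assoc]
    rw [← Matrix.mul_assoc W U (S * (Vᵀ * Xopt)), cancel_left hPwuI]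
  have hM : U * (Pwu * (W * (A * Xopt - B))) = A * Xopt - A * Xt := by
    calc U * (Pwu * (W * (A * Xopt - B)))
        = U * (Pwu * (W * (A * Xopt))) - U * (Pwu * (W * B)) := by
          rw [Matrix.mul_sub W, Matrix.mul_sub Pwu, Matrix.mul_sub U]
    _ = A * Xopt - A * Xt := by rw [key2, key1]
  -- orthogonality of the residual
  have h1 : Aᵀ * A * Ap = Aᵀ := by
    calc Aᵀ * A * Ap = Aᵀ * (A * Ap) := Matrix.mul_assoc _ _ _
    _ = Aᵀ * (A * Ap)ᵀ := by rw [hAp.2.2.1]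
    _ = ((A * Ap) * A)ᵀ := by rw [← Matrix.transpose_mul]
    _ = Aᵀ := by rw [hAp.1]
  have hAtR : Aᵀ * (A * Xopt - B) = 0 := by
    rw [hXopt, Matrix.mul_sub, ← Matrix.mul_assoc, ← Matrix.mul_assoc, h1, sub_self]
  have hneg : -(U * (Pwu * (W * (A * Xopt - B)))) = A * (Xt - Xopt) := by
    rw [hM, Matrix.mul_sub]
    abel
  have horth : (-(U * (Pwu * (W * (A * Xopt - B)))))ᵀ * (A * Xopt - B) = 0 := by
    rw [hneg, Matrix.transpose_mul, Matrix.mul_assoc, hAtR, Matrix.mul_zero]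
  have hdec : A * Xt - B
      = (-(U * (Pwu * (W * (A * Xopt - B))))) + (A * Xopt - B) := by
    rw [hM]
    abel
  rw [hdec, frobSq_add_of_orth horth, frobSq_neg, frobSq_orth_mul hU]
  linarith
end

section
/- Let A ∈ ℝ^{n×d} of rank k with thin SVD A = U_A Σ_A V_Aᵀ, B ∈ ℝ^{n×ω}, and W ∈ ℝ^{r×n} such that W U_A has rank k. Let X_opt = A⁺B and X̃_opt = (W A)⁺ W B. Then ‖A X̃_opt − B‖₂² ≤ ‖A X_opt − B‖₂² + ‖(W U_A)⁺‖₂² · ‖W (A X_opt − B)‖₂². -/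
open Matrix

noncomputable def spec {m n : ℕ} (M : Matrix (Fin m) (Fin n) ℝ) : ℝ :=
  ‖LinearMap.toContinuousLinearMap (Matrix.toEuclideanLin M)‖

open scoped Matrix.Norms.L2Operator

set_option maxHeartbeats 1000000

lemma spec_eq_norm {m n : ℕ} (M : Matrix (Fin m) (Fin n) ℝ) : spec M = ‖M‖ := rfl

lemma transpose_eq_conjTranspose {m n : ℕ} (M : Matrix (Fin m) (Fin n) ℝ) : Mᵀ = Mᴴ :=
  (Matrix.conjTranspose_eq_transpose_of_trivial M).symm

-- full column rank gives left inverse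
lemma left_inv_of_rank {r k : ℕ} (M : Matrix (Fin r) (Fin k) ℝ)
    (hrank : M.rank = k) (P : Matrix (Fin k) (Fin r) ℝ) (h : M * P * M = M) :
    P * M = 1 := by
  have hker : LinearMap.ker M.mulVecLin = ⊥ := by
    have h1 := LinearMap.finrank_range_add_finrank_ker M.mulVecLin
    rw [Module.finrank_fintype_fun_eq_card, Fintype.card_fin] at h1
    have : Module.finrank ℝ (LinearMap.range M.mulVecLin) = k := hrank
    have h0 : Module.finrank ℝ (LinearMap.ker M.mulVecLin) = 0 := by omega
    exact Submodule.finrank_eq_zero.mp h0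
  have hinj : Function.Injective M.mulVecLin := LinearMap.ker_eq_bot.mp hker
  have key : ∀ x, (P * M).mulVec x = x := by
    intro x
    apply hinj
    have h2 : M * (P * M) = M := by rw [← Matrix.mul_assoc]; exact h
    have := congrArg (fun N => N.mulVec x) h2
    simpa [Matrix.mulVec_mulVec] using this
  ext i j
  have := congrFun (key (Pi.single j 1)) i
  simpa [Matrix.mulVec_single, Matrix.one_apply, Pi.single_apply, eq_comm] using this

theorem generic_coreset_bound_spectral {n d ω r k : ℕ}
    (A : Matrix (Fin n) (Fin d) ℝ) (hkA : A.rank = k)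
    (U : Matrix (Fin n) (Fin k) ℝ) (S : Matrix (Fin k) (Fin k) ℝ)
    (V : Matrix (Fin d) (Fin k) ℝ)
    (hSVD : A = U * S * Vᵀ) (hU : Uᵀ * U = 1) (hV : Vᵀ * V = 1)
    (hSdiag : S.IsDiag) (hSinv : IsUnit S.det)
    (B : Matrix (Fin n) (Fin ω) ℝ)
    (W : Matrix (Fin r) (Fin n) ℝ) (hrank : (W * U).rank = k)
    (Ap : Matrix (Fin d) (Fin n) ℝ) (hAp : IsPinv A Ap)
    (Pwa : Matrix (Fin d) (Fin r) ℝ) (hPwa : IsPinv (W * A) Pwa)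
    (Pwu : Matrix (Fin k) (Fin r) ℝ) (hPwu : IsPinv (W * U) Pwu)
    (Xopt : Matrix (Fin d) (Fin ω) ℝ) (hXopt : Xopt = Ap * B)
    (Xt : Matrix (Fin d) (Fin ω) ℝ) (hXt : Xt = Pwa * (W * B)) :
    spec (A * Xt - B) ^ 2
      ≤ spec (A * Xopt - B) ^ 2
        + spec Pwu ^ 2 * spec (W * (A * Xopt - B)) ^ 2 := by
  -- set up
  set E : Matrix (Fin n) (Fin ω) ℝ := A * Xopt - B with hE
  -- S is invertible
  have hS1 : S⁻¹ * S = 1 := Matrix.nonsing_inv_mul S hSinv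
  have hS2 : S * S⁻¹ = 1 := Matrix.mul_nonsing_inv S hSinv
  -- Pwu is a left inverse of W*U
  have hPwuWU : Pwu * (W * U) = 1 := left_inv_of_rank _ hrank _ hPwu.1
  -- AᵀE = 0
  have hAtAAp : Aᵀ * (A * Ap) = Aᵀ := by
    have h := congrArg Matrix.transpose hAp.1
    rw [Matrix.transpose_mul] at h
    rwa [hAp.2.2.1] at h
  have hAtE : Aᵀ * E = 0 := by
    have h3 : Aᵀ * (A * (Ap * B)) = Aᵀ * B := by
      rw [← Matrix.mul_assoc A Ap B, ← Matrix.mul_assoc Aᵀ (A * Ap) B, hAtAAp]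
    rw [hE, hXopt, Matrix.mul_sub, h3, sub_self]
  -- UᵀE = 0
  have hUtE : Uᵀ * E = 0 := by
    have h1 : V * (Sᵀ * (Uᵀ * E)) = 0 := by
      have : Aᵀ = V * Sᵀ * Uᵀ := by
        rw [hSVD, Matrix.transpose_mul, Matrix.transpose_mul, Matrix.transpose_transpose,
          Matrix.mul_assoc]
      rw [← Matrix.mul_assoc, ← Matrix.mul_assoc, ← this, hAtE]
    have h2 : Sᵀ * (Uᵀ * E) = 0 := by
      have := congrArg (fun M => Vᵀ * M) h1
      simpa [← Matrix.mul_assoc, hV] using this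
    have hSt : (Sᵀ)⁻¹ * Sᵀ = 1 := Matrix.nonsing_inv_mul Sᵀ (by rwa [Matrix.det_transpose])
    have := congrArg (fun M => (Sᵀ)⁻¹ * M) h2
    simpa [← Matrix.mul_assoc, hSt] using this
  -- W*A in terms of W*U
  have hWA : W * A = W * U * S * Vᵀ := by rw [hSVD]; simp only [Matrix.mul_assoc]
  -- the two projectors agree : (W*A)*Pwa = (W*U)*Pwu
  have hQP : (W * U * Pwu) * (W * A * Pwa) = W * A * Pwa := by
    have h1 : W * U * Pwu * (W * A) = W * A := by
      calc W * U * Pwu * (W * A) = (W * U * (Pwu * (W * U))) * (S * Vᵀ) := by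
            rw [hWA]; simp only [Matrix.mul_assoc]
      _ = W * A := by rw [hPwuWU, Matrix.mul_one, hWA]; simp only [Matrix.mul_assoc]
    calc (W * U * Pwu) * (W * A * Pwa) = (W * U * Pwu * (W * A)) * Pwa := by
          simp only [Matrix.mul_assoc]
    _ = W * A * Pwa := by rw [h1]
  have hPWU : (W * A * Pwa) * (W * U) = W * U := by
    have h1 : (W * A * Pwa) * (W * U) * S * Vᵀ = W * U * S * Vᵀ := by
      calc (W * A * Pwa) * (W * U) * S * Vᵀ = W * A * Pwa * (W * A) := by
            rw [hWA]; simp only [Matrix.mul_assoc]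
      _ = W * A := hPwa.1
      _ = W * U * S * Vᵀ := hWA
    have h2 : (W * A * Pwa) * (W * U) * S = W * U * S := by
      have := congrArg (fun M => M * V) h1
      simpa [Matrix.mul_assoc, hV] using this
    have := congrArg (fun M => M * S⁻¹) h2
    simpa [Matrix.mul_assoc, hS2] using this
  have hPQ : (W * A * Pwa) * (W * U * Pwu) = W * U * Pwu := by
    calc (W * A * Pwa) * (W * U * Pwu) = ((W * A * Pwa) * (W * U)) * Pwu := by
          simp only [Matrix.mul_assoc]
    _ = W * U * Pwu := by rw [hPWU]
  have hprojeq : W * A * Pwa = W * U * Pwu := by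
    have hPsymm : (W * A * Pwa)ᵀ = W * A * Pwa := hPwa.2.2.1
    have hQsymm : (W * U * Pwu)ᵀ = W * U * Pwu := hPwu.2.2.1
    calc W * A * Pwa = (W * A * Pwa)ᵀ := hPsymm.symm
    _ = ((W * U * Pwu) * (W * A * Pwa))ᵀ := by rw [hQP]
    _ = (W * A * Pwa)ᵀ * (W * U * Pwu)ᵀ := Matrix.transpose_mul _ _
    _ = (W * A * Pwa) * (W * U * Pwu) := by rw [hPsymm, hQsymm]
    _ = W * U * Pwu := hPQ
  -- key identity : S * Vᵀ * Pwa * W = Pwu * W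
  have hkey : S * Vᵀ * Pwa = Pwu * W * U * Pwu := by
    calc S * Vᵀ * Pwa = (Pwu * (W * U)) * S * Vᵀ * Pwa := by
          rw [hPwuWU, Matrix.one_mul]
    _ = Pwu * (W * A * Pwa) := by
          rw [hWA]; simp only [Matrix.mul_assoc]
    _ = Pwu * (W * U * Pwu) := by rw [hprojeq]
    _ = Pwu * W * U * Pwu := by simp only [Matrix.mul_assoc]
  have hkeyW : S * Vᵀ * Pwa * W = Pwu * W := by
    have h3 : Pwu * (W * U) * Pwu = Pwu := hPwu.2.1
    calc S * Vᵀ * Pwa * W = (Pwu * W * U * Pwu) * W := by rw [hkey]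
    _ = (Pwu * (W * U) * Pwu) * W := by rw [Matrix.mul_assoc Pwu W U]
    _ = Pwu * W := by rw [h3]
  -- A * Xt = U * (Pwu * W * B)
  have hAXt : A * Xt = U * (Pwu * (W * B)) := by
    calc A * Xt = U * (S * Vᵀ * (Pwa * (W * B))) := by
          rw [hXt, hSVD]; simp only [Matrix.mul_assoc]
    _ = U * ((S * Vᵀ * Pwa * W) * B) := by
          simp only [Matrix.mul_assoc]
    _ = U * (Pwu * (W * B)) := by rw [hkeyW, Matrix.mul_assoc]
  -- the difference D
  set D : Matrix (Fin k) (Fin ω) ℝ := Pwu * (W * B) - S * Vᵀ * Xopt with hD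
  have hdiff : A * Xt - A * Xopt = U * D := by
    rw [hAXt, hSVD, hD, Matrix.mul_sub, Matrix.mul_assoc, Matrix.mul_assoc, Matrix.mul_assoc]
  have hDE : D = -(Pwu * (W * E)) := by
    have h1 : Pwu * (W * (A * Xopt)) = S * Vᵀ * Xopt := by
      calc Pwu * (W * (A * Xopt)) = (Pwu * (W * U)) * (S * Vᵀ * Xopt) := by
            rw [hSVD]; simp only [Matrix.mul_assoc]
      _ = S * Vᵀ * Xopt := by rw [hPwuWU, Matrix.one_mul]
    rw [hD, hE, Matrix.mul_sub, Matrix.mul_sub, h1]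
    abel
  -- orthogonality : (U*D)ᵀ * E = 0
  have horth : (U * D)ᵀ * E = 0 := by
    rw [Matrix.transpose_mul, Matrix.mul_assoc, hUtE, Matrix.mul_zero]
  -- norms
  have hnorm_UD : ‖U * D‖ ≤ ‖Pwu‖ * ‖W * E‖ := by
    have h1 : ‖U * D‖ * ‖U * D‖ = ‖D‖ * ‖D‖ := by
      rw [← Matrix.l2_opNorm_conjTranspose_mul_self (U * D),
        ← Matrix.l2_opNorm_conjTranspose_mul_self D]
      congr 1
      rw [← transpose_eq_conjTranspose, ← transpose_eq_conjTranspose, Matrix.transpose_mul,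
        Matrix.mul_assoc, ← Matrix.mul_assoc Uᵀ U D, hU, Matrix.one_mul]
    have h2 : ‖U * D‖ = ‖D‖ :=
      (mul_self_inj (norm_nonneg _) (norm_nonneg _)).mp h1
    rw [h2, hDE, norm_neg]
    exact Matrix.l2_opNorm_mul _ _
  -- Pythagoras
  have hsum : A * Xt - B = E + U * D := by rw [← hdiff, hE]; abel
  have hpyth : ‖A * Xt - B‖ ^ 2 ≤ ‖E‖ ^ 2 + ‖U * D‖ ^ 2 := by
    have hEUD : (E + U * D)ᴴ * (E + U * D) = Eᴴ * E + (U * D)ᴴ * (U * D) := by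
      rw [← transpose_eq_conjTranspose, ← transpose_eq_conjTranspose,
        ← transpose_eq_conjTranspose, Matrix.transpose_add, Matrix.add_mul, Matrix.mul_add,
        Matrix.mul_add, horth]
      have horth2 : Eᵀ * (U * D) = 0 := by
        have := congrArg Matrix.transpose horth
        simpa [Matrix.transpose_mul] using this
      rw [horth2]
      abel
    calc ‖A * Xt - B‖ ^ 2 = ‖(E + U * D)ᴴ * (E + U * D)‖ := by
          rw [hsum, Matrix.l2_opNorm_conjTranspose_mul_self]; ring
    _ = ‖Eᴴ * E + (U * D)ᴴ * (U * D)‖ := by rw [hEUD]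
    _ ≤ ‖Eᴴ * E‖ + ‖(U * D)ᴴ * (U * D)‖ := norm_add_le _ _
    _ = ‖E‖ ^ 2 + ‖U * D‖ ^ 2 := by
          rw [Matrix.l2_opNorm_conjTranspose_mul_self, Matrix.l2_opNorm_conjTranspose_mul_self]
          ring
  -- conclude
  simp only [spec_eq_norm]
  have hUD2 : ‖U * D‖ ^ 2 ≤ ‖Pwu‖ ^ 2 * ‖W * E‖ ^ 2 := by
    calc ‖U * D‖ ^ 2 ≤ (‖Pwu‖ * ‖W * E‖) ^ 2 := by
          exact pow_le_pow_left₀ (norm_nonneg _) hnorm_UD 2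
    _ = ‖Pwu‖ ^ 2 * ‖W * E‖ ^ 2 := by ring
  have : W * (A * Xopt - B) = W * E := by rw [hE]
  rw [this]
  linarith
end

section
/- Let Y = [A, b] ∈ ℝ^{n×(d+1)} with thin SVD Y = U Σ Vᵀ, U ∈ ℝ^{n×ℓ}. Suppose W ∈ ℝ^{r×n} satisfies, for all y ∈ ℝ^ℓ, (1 − √(ℓ/r))²‖U y‖² ≤ ‖W U y‖² ≤ (1 + √(ℓ/r))²‖U y‖², with r > ℓ. Let D ⊆ ℝ^d be an arbitrary set, x_opt ∈ D minimize ‖A x − b‖₂ over D, and x̃_opt ∈ D minimize ‖W(A x − b)‖₂ over D. Then ‖A x̃_opt − b‖₂² ≤ ((1 + √(ℓ/r))/(1 − √(ℓ/r)))² · ‖A x_opt − b‖₂². -/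
open Matrix

noncomputable def vnSq {ι : Type*} [Fintype ι] (x : ι → ℝ) : ℝ :=
  ∑ i, (x i) ^ 2

theorem coreset_constrained_regression {n d r ℓ : ℕ} (hr : ℓ < r)
    (A : Matrix (Fin n) (Fin d) ℝ) (b : Fin n → ℝ)
    (Y : Matrix (Fin n) (Fin d ⊕ Fin 1) ℝ)
    (hY : Y = Matrix.of fun i => Sum.elim (A i) (fun _ => b i))
    (U : Matrix (Fin n) (Fin ℓ) ℝ) (S : Matrix (Fin ℓ) (Fin ℓ) ℝ)
    (V : Matrix (Fin d ⊕ Fin 1) (Fin ℓ) ℝ)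
    (hSVD : Y = U * S * Vᵀ) (hU : Uᵀ * U = 1) (hV : Vᵀ * V = 1)
    (hSdiag : S.IsDiag) (hSinv : IsUnit S.det)
    (W : Matrix (Fin r) (Fin n) ℝ)
    (hW : ∀ y : Fin ℓ → ℝ,
      (1 - Real.sqrt ((ℓ : ℝ) / r)) ^ 2 * vnSq (U.mulVec y)
          ≤ vnSq ((W * U).mulVec y) ∧
        vnSq ((W * U).mulVec y)
          ≤ (1 + Real.sqrt ((ℓ : ℝ) / r)) ^ 2 * vnSq (U.mulVec y))
    (D : Set (Fin d → ℝ))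
    (xopt : Fin d → ℝ) (hmem : xopt ∈ D)
    (hopt : ∀ x ∈ D, vnSq (A.mulVec xopt - b) ≤ vnSq (A.mulVec x - b))
    (xt : Fin d → ℝ) (hmemt : xt ∈ D)
    (ht : ∀ x ∈ D, vnSq (W.mulVec (A.mulVec xt - b)) ≤ vnSq (W.mulVec (A.mulVec x - b))) :
    vnSq (A.mulVec xt - b)
      ≤ ((1 + Real.sqrt ((ℓ : ℝ) / r)) / (1 - Real.sqrt ((ℓ : ℝ) / r))) ^ 2
        * vnSq (A.mulVec xopt - b) := by
  set s := Real.sqrt ((ℓ : ℝ) / r) with hsdef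
  have hrpos : (0:ℝ) < r := by
    have : 0 < r := lt_of_le_of_lt (Nat.zero_le ℓ) hr
    exact_mod_cast this
  have hlt1 : (ℓ : ℝ) / r < 1 := by
    rw [div_lt_one hrpos]; exact_mod_cast hr
  have hs1 : s < 1 := by
    rw [hsdef]
    calc Real.sqrt ((ℓ : ℝ) / r) < Real.sqrt 1 := by
          apply Real.sqrt_lt_sqrt (by positivity) hlt1
      _ = 1 := Real.sqrt_one
  have hspos : 0 ≤ s := Real.sqrt_nonneg _
  have hα : (0:ℝ) < 1 - s := by linarith
  -- residual lies in column span of U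
  have hresid : ∀ x : Fin d → ℝ, ∃ y, A.mulVec x - b = U.mulVec y := by
    intro x
    refine ⟨(S * Vᵀ).mulVec (Sum.elim x fun _ => -1), ?_⟩
    have h1 : Y.mulVec (Sum.elim x fun _ => -1) = A.mulVec x - b := by
      subst hY
      ext i
      simp [Matrix.mulVec, dotProduct, Fintype.sum_sum_type, Fin.sum_univ_one,
        sub_eq_add_neg, mul_comm]
    rw [← h1, hSVD, Matrix.mul_assoc, ← Matrix.mulVec_mulVec]
  obtain ⟨yt, hyt⟩ := hresid xt
  obtain ⟨yo, hyo⟩ := hresid xopt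
  have hWmul : ∀ y : Fin ℓ → ℝ, (W * U).mulVec y = W.mulVec (U.mulVec y) := by
    intro y; rw [← Matrix.mulVec_mulVec]
  have h1 : (1 - s) ^ 2 * vnSq (A.mulVec xt - b) ≤ vnSq (W.mulVec (A.mulVec xt - b)) := by
    rw [hyt, ← hWmul]; exact (hW yt).1
  have h2 : vnSq (W.mulVec (A.mulVec xopt - b)) ≤ (1 + s) ^ 2 * vnSq (A.mulVec xopt - b) := by
    rw [hyo, ← hWmul]; exact (hW yo).2
  have h3 := ht xopt hmem
  have hchain : (1 - s) ^ 2 * vnSq (A.mulVec xt - b)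
      ≤ (1 + s) ^ 2 * vnSq (A.mulVec xopt - b) := by linarith
  have hα2 : (0:ℝ) < (1 - s) ^ 2 := by positivity
  rw [div_pow, div_mul_eq_mul_div, le_div_iff₀ hα2]
  linarith [hchain, mul_comm (vnSq (A.mulVec xt - b)) ((1 - s) ^ 2)]
end

section
/- Let A ∈ ℝ^{n×d} be a matrix with orthonormal columns whose first column is 1_n/√n. For every subset C ⊆ {1,...,n} of size r < n, let b ∈ ℝ^n be the unit vector with entries 1/√(n−r) on the complement of C and 0 on C. Then the restriction of b to C is zero (so the coreset least-squares solution on rows indexed by C, with any positive weights, is x̃_opt = 0 with ‖A·0 − b‖₂² = 1), while the full least-squares error satisfies min_{x∈ℝ^d} ‖A x − b‖₂² ≤ r/n. Consequently ‖A x̃_opt − b‖₂² ≥ (n/r)·min_x ‖A x − b‖₂². -/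
open Matrix

theorem b_agnostic_deterministic_lower_bound {n d r : ℕ}
    (hd : 0 < d) (hr : 0 < r) (hrn : r < n)
    (A : Matrix (Fin n) (Fin d) ℝ)
    (horth : Aᵀ * A = 1)
    (hcol : ∀ i, A i ⟨0, hd⟩ = 1 / Real.sqrt n)
    (C : Finset (Fin n)) (hC : C.card = r)
    (b : Fin n → ℝ)
    (hb : b = fun i => if i ∈ C then 0 else 1 / Real.sqrt ((n : ℝ) - r)) :
    (∀ i ∈ C, b i = 0)
    ∧ vnSq (A.mulVec 0 - b) = 1
    ∧ (∃ x : Fin d → ℝ, vnSq (A.mulVec x - b) ≤ (r : ℝ) / n)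
    ∧ ∀ xstar : Fin d → ℝ,
        (∀ x : Fin d → ℝ, vnSq (A.mulVec xstar - b) ≤ vnSq (A.mulVec x - b)) →
          ((n : ℝ) / r) * vnSq (A.mulVec xstar - b) ≤ vnSq (A.mulVec 0 - b) := by
  have hn : 0 < n := hr.trans hrn
  have hnr : (0:ℝ) < (n:ℝ) - r := by
    have : (r:ℝ) < n := by exact_mod_cast hrn
    linarith
  have hnR : (0:ℝ) < (n:ℝ) := by exact_mod_cast hn
  have hsn : Real.sqrt n > 0 := Real.sqrt_pos.mpr hnR
  have hsnr : Real.sqrt ((n:ℝ) - r) > 0 := Real.sqrt_pos.mpr hnr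
  have hsq : Real.sqrt ((n:ℝ) - r) ^ 2 = (n:ℝ) - r := Real.sq_sqrt hnr.le
  have hsqn : Real.sqrt (n:ℝ) ^ 2 = (n:ℝ) := Real.sq_sqrt hnR.le
  have hcardc : Cᶜ.card = n - r := by
    rw [Finset.card_compl, hC, Fintype.card_fin]
  have hcardcR : ((Cᶜ.card : ℝ)) = (n:ℝ) - r := by
    rw [hcardc, Nat.cast_sub hrn.le]
  have h1 : ∀ i ∈ C, b i = 0 := by intro i hi; simp [hb, hi]
  have h2 : vnSq (A.mulVec 0 - b) = 1 := by
    unfold vnSq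
    rw [← Finset.sum_add_sum_compl C]
    have hA0 : ∀ i, (A.mulVec 0 - b) i = -(b i) := by
      intro i; simp [Matrix.mulVec_zero]
    simp only [hA0, neg_sq]
    rw [Finset.sum_eq_zero (fun i hi => by simp [h1 i hi]), zero_add]
    have : ∀ i ∈ Cᶜ, b i ^ 2 = 1 / ((n:ℝ) - r) := by
      intro i hi
      rw [Finset.mem_compl] at hi
      rw [hb]
      simp only [hi, if_false]
      rw [div_pow, one_pow, hsq]
    rw [Finset.sum_congr rfl this, Finset.sum_const, nsmul_eq_mul, hcardcR]
    field_simp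
  refine ⟨h1, h2, ?_, ?_⟩
  · -- existence of good x
    set c : ℝ := Real.sqrt ((n:ℝ) - r) / Real.sqrt n with hc
    refine ⟨fun j => if j = ⟨0, hd⟩ then c else 0, ?_⟩
    have hmv : ∀ i, A.mulVec (fun j => if j = ⟨0, hd⟩ then c else 0) i
        = Real.sqrt ((n:ℝ) - r) / n := by
      intro i
      unfold Matrix.mulVec dotProduct
      rw [Finset.sum_eq_single (⟨0, hd⟩ : Fin d)]
      · simp only [hcol, if_true, hc]
        rw [div_mul_div_comm, one_mul, Real.mul_self_sqrt hnR.le]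
      · intro j _ hj; simp [hj]
      · intro h; simp at h
    unfold vnSq
    rw [← Finset.sum_add_sum_compl C]
    have hin : ∀ i ∈ C, ((A.mulVec (fun j => if j = ⟨0, hd⟩ then c else 0) - b) i)^2
        = ((n:ℝ) - r) / (n:ℝ)^2 := by
      intro i hi
      simp only [Pi.sub_apply, hmv, h1 i hi, sub_zero, div_pow, hsq]
    have hout : ∀ i ∈ Cᶜ, ((A.mulVec (fun j => if j = ⟨0, hd⟩ then c else 0) - b) i)^2
        = (r:ℝ)^2 / ((n:ℝ)^2 * ((n:ℝ) - r)) := by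
      intro i hi
      rw [Finset.mem_compl] at hi
      simp only [Pi.sub_apply, hmv, hb, hi, if_false]
      have : Real.sqrt ((n:ℝ) - r) / (n:ℝ) - 1 / Real.sqrt ((n:ℝ) - r)
          = -(r:ℝ) / ((n:ℝ) * Real.sqrt ((n:ℝ) - r)) := by
        rw [div_sub_div _ _ hnR.ne' hsnr.ne', Real.mul_self_sqrt hnr.le]
        congr 1
        ring
      rw [this, div_pow, mul_pow, hsq]
      ring
    rw [Finset.sum_congr rfl hin, Finset.sum_congr rfl hout,
      Finset.sum_const, Finset.sum_const, nsmul_eq_mul, nsmul_eq_mul, hC, hcardcR]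
    have : (r:ℝ) * (((n:ℝ) - r) / (n:ℝ)^2) + ((n:ℝ) - r) * ((r:ℝ)^2 / ((n:ℝ)^2 * ((n:ℝ) - r)))
        = (r:ℝ) / n := by field_simp; ring
    rw [this]
  · intro xstar hmin
    obtain ⟨x, hx⟩ : ∃ x : Fin d → ℝ, vnSq (A.mulVec x - b) ≤ (r : ℝ) / n := by
      set c : ℝ := Real.sqrt ((n:ℝ) - r) / Real.sqrt n with hc
      refine ⟨fun j => if j = ⟨0, hd⟩ then c else 0, ?_⟩
      have hmv : ∀ i, A.mulVec (fun j => if j = ⟨0, hd⟩ then c else 0) i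
          = Real.sqrt ((n:ℝ) - r) / n := by
        intro i
        unfold Matrix.mulVec dotProduct
        rw [Finset.sum_eq_single (⟨0, hd⟩ : Fin d)]
        · simp only [hcol, if_true, hc]
          rw [div_mul_div_comm, one_mul, Real.mul_self_sqrt hnR.le]
        · intro j _ hj; simp [hj]
        · intro h; simp at h
      unfold vnSq
      rw [← Finset.sum_add_sum_compl C]
      have hin : ∀ i ∈ C, ((A.mulVec (fun j => if j = ⟨0, hd⟩ then c else 0) - b) i)^2
          = ((n:ℝ) - r) / (n:ℝ)^2 := by
        intro i hi
        simp only [Pi.sub_apply, hmv, h1 i hi, sub_zero, div_pow, hsq]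
      have hout : ∀ i ∈ Cᶜ, ((A.mulVec (fun j => if j = ⟨0, hd⟩ then c else 0) - b) i)^2
          = (r:ℝ)^2 / ((n:ℝ)^2 * ((n:ℝ) - r)) := by
        intro i hi
        rw [Finset.mem_compl] at hi
        simp only [Pi.sub_apply, hmv, hb, hi, if_false]
        have : Real.sqrt ((n:ℝ) - r) / (n:ℝ) - 1 / Real.sqrt ((n:ℝ) - r)
            = -(r:ℝ) / ((n:ℝ) * Real.sqrt ((n:ℝ) - r)) := by
          rw [div_sub_div _ _ hnR.ne' hsnr.ne', Real.mul_self_sqrt hnr.le]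
          congr 1
          ring
        rw [this, div_pow, mul_pow, hsq]
        ring
      rw [Finset.sum_congr rfl hin, Finset.sum_congr rfl hout,
        Finset.sum_const, Finset.sum_const, nsmul_eq_mul, nsmul_eq_mul, hC, hcardcR]
      have : (r:ℝ) * (((n:ℝ) - r) / (n:ℝ)^2) + ((n:ℝ) - r) * ((r:ℝ)^2 / ((n:ℝ)^2 * ((n:ℝ) - r)))
          = (r:ℝ) / n := by field_simp; ring
      rw [this]
    have h3 : vnSq (A.mulVec xstar - b) ≤ (r:ℝ) / n := (hmin x).trans hx
    have hrR : (0:ℝ) < (r:ℝ) := by exact_mod_cast hr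
    rw [h2]
    rw [div_mul_eq_mul_div, div_le_iff₀ hrR, one_mul]
    calc (n:ℝ) * vnSq (A.mulVec xstar - b) ≤ (n:ℝ) * ((r:ℝ)/n) := by
          exact mul_le_mul_of_nonneg_left h3 hnR.le
      _ = r := by field_simp
end

section
/- Fix integers n, r, ℓ with 0 ≤ ℓ ≤ n − r. Consider any probability distribution (p_i) over the C(n,r) subsets (coresets) of {1,...,n} of size r. For a set T of size ℓ, let N(T) be the collection of coresets intersecting T. Then ∑_{T : |T|=ℓ} P[selected coreset ∈ N(T)] = C(n,ℓ) − C(n−r,ℓ), and consequently there exists a set T* of size ℓ such that the probability the selected coreset intersects T* is at most 1 − C(n−r,ℓ)/C(n,ℓ); equivalently, with probability at least C(n−r,ℓ)/C(n,ℓ), the selected coreset is disjoint from T*. -/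
open Finset

theorem randomized_agnostic_counting {n r ℓ : ℕ}
    (hr : r ≤ n) (hℓ : ℓ ≤ n - r)
    (p : Finset (Fin n) → ℝ)
    (hp : ∀ C, 0 ≤ p C)
    (hsupp : ∀ C : Finset (Fin n), C.card ≠ r → p C = 0)
    (hsum : ∑ C ∈ Finset.univ.filter (fun C : Finset (Fin n) => C.card = r), p C = 1) :
    (∑ T ∈ Finset.univ.filter (fun T : Finset (Fin n) => T.card = ℓ),
        (∑ C ∈ Finset.univ.filter
            (fun C : Finset (Fin n) => C.card = r ∧ (C ∩ T).Nonempty), p C))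
      = (n.choose ℓ : ℝ) - ((n - r).choose ℓ : ℝ)
    ∧ ∃ T : Finset (Fin n), T.card = ℓ ∧
        (∑ C ∈ Finset.univ.filter
            (fun C : Finset (Fin n) => C.card = r ∧ (C ∩ T).Nonempty), p C)
          ≤ 1 - ((n - r).choose ℓ : ℝ) / (n.choose ℓ : ℝ) := by
  classical
  set A := n.choose ℓ with hAdef
  set B := (n - r).choose ℓ with hBdef
  have hBA : B ≤ A := Nat.choose_le_choose ℓ (Nat.sub_le n r)
  have hApos : 0 < A := Nat.choose_pos (le_trans hℓ (Nat.sub_le n r))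
  have hTcard : (univ.filter (fun T : Finset (Fin n) => T.card = ℓ)).card = A := by
    have h : univ.filter (fun T : Finset (Fin n) => T.card = ℓ)
        = (univ : Finset (Fin n)).powersetCard ℓ := by
      ext T; simp [Finset.mem_powersetCard]
    rw [h, Finset.card_powersetCard]; simp [hAdef]
  have hcount : ∀ C : Finset (Fin n), C.card = r →
      (univ.filter (fun T : Finset (Fin n) => T.card = ℓ ∧ (C ∩ T).Nonempty)).card
        = A - B := by
    intro C hC
    have h2 : (univ.filter (fun T : Finset (Fin n) =>
        T.card = ℓ ∧ ¬(C ∩ T).Nonempty)).card = B := by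
      have h : univ.filter (fun T : Finset (Fin n) => T.card = ℓ ∧ ¬(C ∩ T).Nonempty)
          = Cᶜ.powersetCard ℓ := by
        ext T
        simp only [mem_filter, mem_univ, true_and, Finset.mem_powersetCard,
          Finset.not_nonempty_iff_eq_empty, ← Finset.disjoint_iff_inter_eq_empty,
          Finset.disjoint_left, Finset.subset_iff, Finset.mem_compl]
        tauto
      rw [h, Finset.card_powersetCard, Finset.card_compl, hC]
      simp [hBdef]
    have hsplit := Finset.card_filter_add_card_filter_not
      (s := univ.filter (fun T : Finset (Fin n) => T.card = ℓ))
      (p := fun T => (C ∩ T).Nonempty)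
    rw [Finset.filter_filter, Finset.filter_filter, hTcard] at hsplit
    omega
  have key : (∑ T ∈ univ.filter (fun T : Finset (Fin n) => T.card = ℓ),
        (∑ C ∈ univ.filter
            (fun C : Finset (Fin n) => C.card = r ∧ (C ∩ T).Nonempty), p C))
      = ((A - B : ℕ) : ℝ) := by
    have hrw : ∀ T : Finset (Fin n),
        (∑ C ∈ univ.filter (fun C : Finset (Fin n) => C.card = r ∧ (C ∩ T).Nonempty), p C)
        = ∑ C ∈ univ.filter (fun C : Finset (Fin n) => C.card = r),
            (if (C ∩ T).Nonempty then p C else 0) := by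
      intro T
      rw [Finset.sum_filter, Finset.sum_filter]
      apply Finset.sum_congr rfl
      intro C _
      by_cases h1 : C.card = r <;> by_cases h2 : (C ∩ T).Nonempty <;> simp [h1, h2]
    calc (∑ T ∈ univ.filter (fun T : Finset (Fin n) => T.card = ℓ),
        (∑ C ∈ univ.filter
            (fun C : Finset (Fin n) => C.card = r ∧ (C ∩ T).Nonempty), p C))
        = ∑ T ∈ univ.filter (fun T : Finset (Fin n) => T.card = ℓ),
            ∑ C ∈ univ.filter (fun C : Finset (Fin n) => C.card = r),
              (if (C ∩ T).Nonempty then p C else 0) := by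
          exact Finset.sum_congr rfl (fun T _ => hrw T)
      _ = ∑ C ∈ univ.filter (fun C : Finset (Fin n) => C.card = r),
            ∑ T ∈ univ.filter (fun T : Finset (Fin n) => T.card = ℓ),
              (if (C ∩ T).Nonempty then p C else 0) := Finset.sum_comm
      _ = ∑ C ∈ univ.filter (fun C : Finset (Fin n) => C.card = r),
            ((A - B : ℕ) : ℝ) * p C := by
          apply Finset.sum_congr rfl
          intro C hC
          rw [mem_filter] at hC
          rw [← Finset.sum_filter, Finset.filter_filter, Finset.sum_const,
            hcount C hC.2]
          simp [nsmul_eq_mul]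
      _ = ((A - B : ℕ) : ℝ) := by rw [← Finset.mul_sum, hsum, mul_one]
  have hcast : ((A - B : ℕ) : ℝ) = (A : ℝ) - (B : ℝ) := by
    exact Nat.cast_sub hBA
  constructor
  · rw [key, hcast]
  · have hne : (univ.filter (fun T : Finset (Fin n) => T.card = ℓ)).Nonempty := by
      rw [← Finset.card_pos, hTcard]; exact hApos
    have hAne : (A : ℝ) ≠ 0 := by positivity
    have hle : (∑ T ∈ univ.filter (fun T : Finset (Fin n) => T.card = ℓ),
        (∑ C ∈ univ.filter
            (fun C : Finset (Fin n) => C.card = r ∧ (C ∩ T).Nonempty), p C))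
        ≤ ∑ _T ∈ univ.filter (fun T : Finset (Fin n) => T.card = ℓ),
            (1 - (B : ℝ) / (A : ℝ)) := by
      rw [key, hcast, Finset.sum_const, hTcard, nsmul_eq_mul]
      rw [mul_sub, mul_one, mul_div_cancel₀ _ hAne]
    obtain ⟨T, hT, hTle⟩ := Finset.exists_le_of_sum_le hne hle
    rw [mem_filter] at hT
    exact ⟨T, hT.2, hTle⟩
end

section
/- Let n, r, ℓ be integers with 0 ≤ ℓ ≤ n − r, let A ∈ ℝ^{n×d} have orthonormal columns with first column 1_n/√n, and let T ⊆ {1,...,n} with |T| = ℓ. Set b = 1_T/√ℓ (assuming ℓ ≥ 1). If a coreset C ⊆ {1,...,n} of size r is disjoint from T, then the coreset regression solution is x̃_opt = 0, with ‖A x̃_opt − b‖₂² = 1, while min_x ‖A x − b‖₂² ≤ (n−ℓ)/n; hence ‖A x̃_opt − b‖₂² ≥ (n/(n−ℓ))·min_x ‖A x − b‖₂². -/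
/-! Since `b` vanishes on the coreset, `x = 0` fits it exactly, yet it leaves the whole residual
`‖b‖² = 1`. Projecting `b` onto the first column `1/√n` instead leaves, by Pythagoras,
`1 - ⟨1/√n, b⟩² = 1 - ℓ/n`. -/

open Matrix

section vnSq

variable {ι : Type*} [Fintype ι]

lemma vnSq_eq_dotProduct (x : ι → ℝ) : vnSq x = x ⬝ᵥ x := by
  simp only [vnSq, dotProduct, sq]

lemma vnSq_nonneg (x : ι → ℝ) : 0 ≤ vnSq x :=
  Finset.sum_nonneg fun i _ => sq_nonneg (x i)

lemma vnSq_neg (x : ι → ℝ) : vnSq (-x) = vnSq x := by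
  simp only [vnSq, Pi.neg_apply, neg_sq]

lemma vnSq_const (a : ℝ) : vnSq (fun _ : ι => a) = Fintype.card ι * a ^ 2 := by
  simp [vnSq]

lemma vnSq_ite_mem [DecidableEq ι] (T : Finset ι) (c : ℝ) :
    vnSq (fun i => if i ∈ T then c else 0) = T.card * c ^ 2 := by
  simp [vnSq, apply_ite (· ^ 2), Finset.sum_ite_mem]

lemma const_dotProduct_ite_mem [DecidableEq ι] (T : Finset ι) (a c : ℝ) :
    (fun _ => a) ⬝ᵥ (fun i => if i ∈ T then c else 0) = T.card * (a * c) := by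
  simp [dotProduct, Finset.sum_ite_mem]

lemma vnSq_dotProduct_smul_sub {u : ι → ℝ} (hu : vnSq u = 1) (b : ι → ℝ) :
    vnSq ((u ⬝ᵥ b) • u - b) = vnSq b - (u ⬝ᵥ b) ^ 2 := by
  rw [vnSq_eq_dotProduct] at hu ⊢
  rw [vnSq_eq_dotProduct]
  simp only [sub_dotProduct, dotProduct_sub, smul_dotProduct, dotProduct_smul, smul_eq_mul,
    hu, dotProduct_comm b u]
  ring

end vnSq

lemma exists_vnSq_mulVec_sub_eq {m k : Type*} [Fintype m] [Fintype k] [DecidableEq k]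
    (A : Matrix m k ℝ) {j : k} {u : m → ℝ} (hcol : A.col j = u) (hu : vnSq u = 1) (b : m → ℝ) :
    ∃ x : k → ℝ, vnSq (A *ᵥ x - b) = vnSq b - (u ⬝ᵥ b) ^ 2 :=
  ⟨(u ⬝ᵥ b) • Pi.single j 1, by
    rw [mulVec_smul, mulVec_single_one, hcol, vnSq_dotProduct_smul_sub hu]⟩

lemma sum_weighted_sq_mulVec_zero_sub_le {m k : Type*} [Fintype k] (A : Matrix m k ℝ)
    {C : Finset m} {b s : m → ℝ} (hb : ∀ i ∈ C, b i = 0) (hs : ∀ i ∈ C, 0 ≤ s i) (x : k → ℝ) :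
    ∑ i ∈ C, s i * ((A *ᵥ 0) i - b i) ^ 2 ≤ ∑ i ∈ C, s i * ((A *ᵥ x) i - b i) ^ 2 := by
  rw [Finset.sum_eq_zero fun i hi => by simp [hb i hi]]
  exact Finset.sum_nonneg fun i hi => mul_nonneg (hs i hi) (sq_nonneg _)

theorem randomized_agnostic_bad_target_general {n d ℓ : ℕ}
    (hd : 0 < d) (hℓ : 1 ≤ ℓ)
    (A : Matrix (Fin n) (Fin d) ℝ)
    (hcol : ∀ i, A i ⟨0, hd⟩ = 1 / Real.sqrt n)
    (T : Finset (Fin n)) (hT : T.card = ℓ)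
    (b : Fin n → ℝ)
    (hb : b = fun i => if i ∈ T then 1 / Real.sqrt (ℓ : ℝ) else 0)
    (C : Finset (Fin n)) (hdisj : Disjoint C T) :
    (∀ s : Fin n → ℝ, (∀ i ∈ C, 0 < s i) → ∀ x : Fin d → ℝ,
        (∑ i ∈ C, s i * ((A.mulVec 0) i - b i) ^ 2)
          ≤ ∑ i ∈ C, s i * ((A.mulVec x) i - b i) ^ 2)
    ∧ vnSq (A.mulVec 0 - b) = 1
    ∧ (∃ x : Fin d → ℝ, vnSq (A.mulVec x - b) ≤ ((n : ℝ) - ℓ) / n)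
    ∧ ∀ xstar : Fin d → ℝ,
        (∀ x : Fin d → ℝ, vnSq (A.mulVec xstar - b) ≤ vnSq (A.mulVec x - b)) →
          ((n : ℝ) / ((n : ℝ) - ℓ)) * vnSq (A.mulVec xstar - b)
            ≤ vnSq (A.mulVec 0 - b) := by
  have hℓn : ℓ ≤ n := by simpa [hT] using T.card_le_univ
  have hn : (0 : ℝ) < n := by exact_mod_cast hℓ.trans hℓn
  have hℓ' : (0 : ℝ) < ℓ := by exact_mod_cast hℓ
  have hu : vnSq (fun _ : Fin n => 1 / Real.sqrt n) = 1 := by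
    rw [vnSq_const, Fintype.card_fin, div_pow, Real.sq_sqrt hn.le]
    field_simp
  have hb_sq : vnSq b = 1 := by
    rw [hb, vnSq_ite_mem, hT, div_pow, Real.sq_sqrt hℓ'.le]
    field_simp
  have hub : ((fun _ : Fin n => 1 / Real.sqrt n) ⬝ᵥ b) ^ 2 = ℓ / n := by
    rw [hb, const_dotProduct_ite_mem, hT, mul_pow, mul_pow, div_pow, div_pow,
      Real.sq_sqrt hn.le, Real.sq_sqrt hℓ'.le]
    field_simp
  have hres_zero : vnSq (A *ᵥ 0 - b) = 1 := by
    rw [mulVec_zero, zero_sub, vnSq_neg, hb_sq]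
  obtain ⟨x₀, hx₀⟩ := exists_vnSq_mulVec_sub_eq A (funext hcol) hu b
  have hres_x₀ : vnSq (A *ᵥ x₀ - b) ≤ ((n : ℝ) - ℓ) / n := by
    rw [hx₀, hb_sq, hub, sub_div, div_self hn.ne']
  refine ⟨fun s hs => sum_weighted_sq_mulVec_zero_sub_le A
    (fun i hi => by simp [hb, Finset.disjoint_left.mp hdisj hi]) (fun i hi => (hs i hi).le),
    hres_zero, ⟨x₀, hres_x₀⟩, fun xstar hstar => ?_⟩
  rw [hres_zero, ← inv_div]
  exact inv_mul_le_one_of_le₀ ((hstar x₀).trans hres_x₀)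
    ((vnSq_nonneg _).trans ((hstar x₀).trans hres_x₀))

theorem randomized_agnostic_bad_target {n d r ℓ : ℕ}
    (hd : 0 < d) (hℓ : 1 ≤ ℓ) (hℓn : ℓ ≤ n - r)
    (A : Matrix (Fin n) (Fin d) ℝ)
    (horth : Aᵀ * A = 1)
    (hcol : ∀ i, A i ⟨0, hd⟩ = 1 / Real.sqrt n)
    (T : Finset (Fin n)) (hT : T.card = ℓ)
    (b : Fin n → ℝ)
    (hb : b = fun i => if i ∈ T then 1 / Real.sqrt (ℓ : ℝ) else 0)
    (C : Finset (Fin n)) (hC : C.card = r) (hdisj : Disjoint C T) :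
    (∀ s : Fin n → ℝ, (∀ i ∈ C, 0 < s i) → ∀ x : Fin d → ℝ,
        (∑ i ∈ C, s i * ((A.mulVec 0) i - b i) ^ 2)
          ≤ ∑ i ∈ C, s i * ((A.mulVec x) i - b i) ^ 2)
    ∧ vnSq (A.mulVec 0 - b) = 1
    ∧ (∃ x : Fin d → ℝ, vnSq (A.mulVec x - b) ≤ ((n : ℝ) - ℓ) / n)
    ∧ ∀ xstar : Fin d → ℝ,
        (∀ x : Fin d → ℝ, vnSq (A.mulVec xstar - b) ≤ vnSq (A.mulVec x - b)) →
          ((n : ℝ) / ((n : ℝ) - ℓ)) * vnSq (A.mulVec xstar - b)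
            ≤ vnSq (A.mulVec 0 - b) :=
  randomized_agnostic_bad_target_general hd hℓ A hcol T hT b hb C hdisj
end

section
/- Suppose there exists a matrix B ∈ ℝ^{(ω−1)×ω} such that for every r-row sampling matrix S ∈ ℝ^{r×(ω−1)} and positive diagonal D ∈ ℝ^{r×r}, the best rank-d approximation Π_{C,d}(B) of B in the row space of C = DSB satisfies ‖B − Π_{C,d}(B)‖₂² ≥ (ω/(r+1))·‖B − B_d‖₂². Set A = U_{B,d} ∈ ℝ^{(ω−1)×d} (top-d left singular vectors of B). Then for every such S, D, the coreset solution X̃_opt = (D S A)⁺ D S B satisfies ‖A X̃_opt − B‖₂² ≥ (ω/(r+1))·‖A X_opt − B‖₂², where X_opt = A⁺B. -/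
open Matrix

/-- Each row of `S` is a standard basis (row-sampling) vector. -/
def IsSampling {r m : ℕ} (S : Matrix (Fin r) (Fin m) ℝ) : Prop :=
  ∀ i, ∃ j, S i = fun j' => if j' = j then 1 else 0

/-- `D` is a diagonal matrix with positive diagonal entries. -/
def IsPosDiag {r : ℕ} (D : Matrix (Fin r) (Fin r) ℝ) : Prop :=
  D.IsDiag ∧ ∀ i, 0 < D i i

lemma spec_neg {m n : ℕ} (M : Matrix (Fin m) (Fin n) ℝ) : spec (-M) = spec M := by
  unfold spec
  rw [map_neg, map_neg, norm_neg]

theorem spectral_lower_bound_regression {ω r d : ℕ} (hω : 1 ≤ ω) (hrd : d < r)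
    (B : Matrix (Fin (ω - 1)) (Fin ω) ℝ)
    (A : Matrix (Fin (ω - 1)) (Fin d) ℝ) (hA : Aᵀ * A = 1)
    (Ap : Matrix (Fin d) (Fin (ω - 1)) ℝ) (hAp : IsPinv A Ap)
    (Xopt : Matrix (Fin d) (Fin ω) ℝ) (hXopt : Xopt = Ap * B)
    -- hypothesis: every rank-at-most-d matrix whose rows lie in the row space of
    -- the coreset C = D·S·B has spectral error at least (ω/(r+1))·‖B - B_d‖₂²,
    -- where B_d = A·X_opt is the best rank-d approximation of B
    (hB : ∀ (S : Matrix (Fin r) (Fin (ω - 1)) ℝ) (D : Matrix (Fin r) (Fin r) ℝ),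
      IsSampling S → IsPosDiag D →
        ∀ M : Matrix (Fin (ω - 1)) (Fin ω) ℝ, M.rank ≤ d →
          (∀ i, M i ∈ Submodule.span ℝ (Set.range fun q => (D * S * B) q)) →
            ((ω : ℝ) / (r + 1)) * spec (B - A * Xopt) ^ 2 ≤ spec (B - M) ^ 2) :
    ∀ (S : Matrix (Fin r) (Fin (ω - 1)) ℝ) (D : Matrix (Fin r) (Fin r) ℝ),
      IsSampling S → IsPosDiag D →
        ∀ Pdsa : Matrix (Fin d) (Fin r) ℝ, IsPinv (D * S * A) Pdsa →
          ∀ Xt : Matrix (Fin d) (Fin ω) ℝ, Xt = Pdsa * (D * S * B) →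
            ((ω : ℝ) / (r + 1)) * spec (A * Xopt - B) ^ 2
              ≤ spec (A * Xt - B) ^ 2 := by
  intro S D hS hD Pdsa hP Xt hXt
  have hrank : (A * Xt).rank ≤ d :=
    le_trans (Matrix.rank_mul_le_left A Xt)
      (le_trans (Matrix.rank_le_card_width A) (by simp))
  have hrow : ∀ i, (A * Xt) i ∈
      Submodule.span ℝ (Set.range fun q => (D * S * B) q) := by
    intro i
    have hEq : A * Xt = (A * Pdsa) * (D * S * B) := by
      rw [hXt]; simp only [Matrix.mul_assoc]
    rw [hEq]
    have h : ((A * Pdsa) * (D * S * B)) i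
        = ∑ q, (A * Pdsa) i q • (D * S * B) q := by
      ext j; simp [Matrix.mul_apply, Finset.sum_apply]
    rw [h]
    exact Submodule.sum_mem _ fun q _ =>
      Submodule.smul_mem _ _ (Submodule.subset_span ⟨q, rfl⟩)
  have key := hB S D hS hD (A * Xt) hrank hrow
  have e1 : spec (B - A * Xopt) = spec (A * Xopt - B) := by
    rw [← neg_sub (A * Xopt) B, spec_neg]
  have e2 : spec (B - A * Xt) = spec (A * Xt - B) := by
    rw [← neg_sub (A * Xt) B, spec_neg]
  rwa [e1, e2] at key
end
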